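/- arXiv:1703.01625 — 2 statements merged into one kernel-verified Lean document; each statement's English description precedes it below -/
import Mathlib

section
/- The Stieltjes moment problem ∫₀^∞ x^n W(x) dx = (n!)²/(n+p)! · |c|^{-2n} for all nonnegative integers n has the solution W(x) = |c|² (|c|²x)^p G^{2,0}_{1,2}(|c|²x | 0 / −p,−p), that is, ∫₀^∞ x^{n+p} |c|^{2(p+1)} G^{2,0}_{1,2}(|c|²x | 0 / −p,−p) dx = Γ(n+1)²/Γ(n+p+1) · |c|^{−2n} for all nonnegative integers n. -/
open Real MeasureTheory

/-- The Stieltjes moment problem `∫₀^∞ x^n W(x) dx = (n!)²/(n+p)! · |c|^{-2n}` is solved by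
`W(x) = |c|^{2(p+1)} x^p h(|c|² x)` (up to the factor `x^p` absorbed below), where `h` is the
Meijer G-function `G^{2,0}_{1,2}(x ; 0 ; -p, -p)` characterized by its Mellin transform. -/
theorem stieltjes_moment_solution (p : ℕ) (c : ℂ) (hc : c ≠ 0) (h : ℝ → ℝ)
    (hMellin : ∀ s : ℝ, (p : ℝ) < s →
      ∫ x in Set.Ioi (0 : ℝ), x ^ (s - 1) * h x
        = Real.Gamma (s - p) ^ 2 / Real.Gamma s) :
    ∀ n : ℕ, ∫ x in Set.Ioi (0 : ℝ),
        x ^ ((n : ℝ) + p) * (‖c‖ ^ (2 * (p + 1)) * h (‖c‖ ^ 2 * x))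
      = Real.Gamma (n + 1) ^ 2 / Real.Gamma (n + p + 1) * ‖c‖ ^ (-(2 : ℝ) * n) := by
  intro n
  set A : ℝ := ‖c‖ with hA
  have hA0 : 0 < A := by simpa [hA] using norm_pos_iff.mpr hc
  have hA2 : (0 : ℝ) < A ^ 2 := by positivity
  have key := hMellin ((n : ℝ) + p + 1) (by
    have : (0 : ℝ) ≤ n := Nat.cast_nonneg n
    linarith)
  have hkey : ∫ x in Set.Ioi (0 : ℝ), x ^ ((n : ℝ) + p) * h x
      = Real.Gamma (n + 1) ^ 2 / Real.Gamma (n + p + 1) := by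
    rw [show ((n : ℝ) + p + 1) - 1 = (n : ℝ) + p by ring,
      show ((n : ℝ) + p + 1) - p = (n : ℝ) + 1 by ring] at key
    exact key
  have hsub : (∫ x in Set.Ioi (0 : ℝ), (fun u => u ^ ((n : ℝ) + p) * h u) (A ^ 2 * x))
      = (A ^ 2)⁻¹ • ∫ x in Set.Ioi (A ^ 2 * 0), (fun u => u ^ ((n : ℝ) + p) * h u) x :=
    integral_comp_mul_left_Ioi (fun u => u ^ ((n : ℝ) + p) * h u) 0 hA2
  simp only [mul_zero] at hsub
  have hpowne : (A ^ 2) ^ ((n : ℝ) + p) ≠ 0 :=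
    (Real.rpow_pos_of_pos hA2 _).ne'
  have heq : ∀ x ∈ Set.Ioi (0 : ℝ),
      x ^ ((n : ℝ) + p) * (A ^ (2 * (p + 1)) * h (A ^ 2 * x))
      = (A ^ (2 * (p + 1)) * (((A ^ 2) ^ ((n : ℝ) + p))⁻¹)) *
          ((fun u => u ^ ((n : ℝ) + p) * h u) (A ^ 2 * x)) := by
    intro x hx
    have hx0 : 0 < x := hx
    have hm : (A ^ 2 * x) ^ ((n : ℝ) + p) = (A ^ 2) ^ ((n : ℝ) + p) * x ^ ((n : ℝ) + p) :=
      Real.mul_rpow hA2.le hx0.le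
    simp only [hm]
    field_simp
  rw [setIntegral_congr_fun measurableSet_Ioi heq, integral_const_mul, hsub, hkey,
    smul_eq_mul]
  have hconst : A ^ (2 * (p + 1)) * (((A ^ 2) ^ ((n : ℝ) + p))⁻¹) * ((A ^ 2)⁻¹)
      = A ^ (-(2 : ℝ) * n) := by
    rw [← Real.rpow_natCast A (2 * (p + 1)), ← Real.rpow_natCast A 2,
      ← Real.rpow_mul hA0.le, ← Real.rpow_neg hA0.le, ← Real.rpow_neg hA0.le,
      ← Real.rpow_add hA0, ← Real.rpow_add hA0]
    congr 1
    push_cast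
    ring
  calc A ^ (2 * (p + 1)) * (((A ^ 2) ^ ((n : ℝ) + p))⁻¹) *
        ((A ^ 2)⁻¹ * (Real.Gamma (n + 1) ^ 2 / Real.Gamma (n + p + 1)))
      = (A ^ (2 * (p + 1)) * (((A ^ 2) ^ ((n : ℝ) + p))⁻¹) * ((A ^ 2)⁻¹)) *
        (Real.Gamma (n + 1) ^ 2 / Real.Gamma (n + p + 1)) := by ring
    _ = Real.Gamma (n + 1) ^ 2 / Real.Gamma (n + p + 1) * A ^ (-(2 : ℝ) * n) := by
        rw [hconst]; ring
end

section
/- For the Hermite/Laguerre GPAH-CS, the expectation ⟨N_m⟩ = (m+p) · ₂F₂(1+p, m+p+1; 1, m+p; x) / ₁F₁(1+p; 1; x), where x = |cz|². -/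
/-!
Termwise comparison: since `Γ(k + 1) = k!`, the weight `Γ(n+p+1)/Γ(n+1)²` is
`Γ(p+1) (1+p)_n / ((1)_n n!)`, and for `a = m + p > 0` the factor `a + n` is `a (a+1)_n / (a)_n`.
Hence the numerator series is `Γ(p+1) (m+p)` times the `₂F₂` series, and `Γ(p+1)` cancels.
-/

/-- Pochhammer (rising factorial) symbol `(a)_n`. -/
noncomputable def poch (a : ℝ) (n : ℕ) : ℝ := Polynomial.eval a (ascPochhammer ℝ n)

/-- `₁F₁(1+p; 1; x)`. -/
noncomputable def F11 (p : ℕ) (x : ℝ) : ℝ :=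
  ∑' n : ℕ, poch (1 + p) n / poch 1 n * x ^ n / Nat.factorial n

/-- `₂F₂(1+p, m+p+1; 1, m+p; x)`. -/
noncomputable def F22 (m p : ℕ) (x : ℝ) : ℝ :=
  ∑' n : ℕ, poch (1 + p) n * poch ((m : ℝ) + p + 1) n
      / (poch 1 n * poch ((m : ℝ) + p) n) * x ^ n / Nat.factorial n

theorem mul_poch_add_one (a : ℝ) (n : ℕ) : a * poch (a + 1) n = poch a n * (a + n) := by
  simp only [poch, ← ascPochhammer_succ_eval, ascPochhammer_succ_left, Polynomial.eval_mul, Polynomial.eval_X,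
    Polynomial.eval_comp, Polynomial.eval_add, Polynomial.eval_one]

theorem poch_one (n : ℕ) : poch 1 n = n.factorial := ascPochhammer_eval_one ℝ n

theorem Gamma_nat_add_div_Gamma_sq (p n : ℕ) :
    Real.Gamma (n + p + 1) / Real.Gamma (n + 1) ^ 2
      = Real.Gamma (p + 1) * (poch (1 + p) n / poch 1 n / n.factorial) := by
  have hfac : p.factorial * poch (1 + p) n = (p + n).factorial := by
    rw [add_comm (1 : ℝ)]; exact factorial_mul_ascPochhammer ℝ p n
  rw [show (n : ℝ) + p + 1 = ((p + n : ℕ) : ℝ) + 1 by push_cast; ring,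
    Real.Gamma_nat_eq_factorial, Real.Gamma_nat_eq_factorial, Real.Gamma_nat_eq_factorial,
    ← hfac, poch_one]
  field_simp

theorem mul_poch_add_one_div_poch {a : ℝ} (ha : 0 < a) (n : ℕ) :
    a * (poch (a + 1) n / poch a n) = a + n := by
  have hpos : 0 < poch a n := ascPochhammer_pos n a ha
  rw [← mul_div_assoc, mul_poch_add_one, mul_div_cancel_left₀ _ hpos.ne']

theorem summand_eq_Gamma_mul_F22_term {m p : ℕ} (hmp : (0 : ℝ) < m + p) (x : ℝ) (n : ℕ) :
    ((m : ℝ) + n + p) * x ^ n * Real.Gamma (n + p + 1) / Real.Gamma (n + 1) ^ 2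
      = Real.Gamma (p + 1) * (((m : ℝ) + p) * (poch (1 + p) n * poch ((m : ℝ) + p + 1) n
          / (poch 1 n * poch ((m : ℝ) + p) n) * x ^ n / n.factorial)) := by
  have hratio := mul_poch_add_one_div_poch hmp n
  rw [mul_div_assoc, Gamma_nat_add_div_Gamma_sq, add_right_comm, ← hratio]
  ring

theorem number_expectation_hypergeometric_general (m p : ℕ) (hmp : 1 ≤ m + p) (x : ℝ) :
    (∑' n : ℕ, ((m : ℝ) + n + p) * x ^ n * Real.Gamma (n + p + 1) / Real.Gamma (n + 1) ^ 2)
        / (Real.Gamma (p + 1) * F11 p x)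
      = ((m : ℝ) + p) * F22 m p x / F11 p x := by
  have hmpR : (0 : ℝ) < m + p := by exact_mod_cast hmp
  have hΓ : Real.Gamma (p + 1) ≠ 0 := (Real.Gamma_pos_of_pos (by positivity)).ne'
  rw [tsum_congr (summand_eq_Gamma_mul_F22_term hmpR x), tsum_mul_left, tsum_mul_left,
    mul_div_mul_left _ _ hΓ]
  rfl

/-- For the Hermite/Laguerre GPAH-CS,
`⟨N_m⟩ = 𝒩_p²(x) ∑_n (m+n+p) x^n Γ(n+p+1)/Γ(n+1)²` with
`𝒩_p(x)^{-2} = Γ(p+1) ₁F₁(1+p;1;x)` equals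
`(m+p) ₂F₂(1+p, m+p+1; 1, m+p; x) / ₁F₁(1+p; 1; x)`. -/
theorem number_expectation_hypergeometric (m p : ℕ) (hmp : 1 ≤ m + p) (x : ℝ) (hx : 0 ≤ x) :
    (∑' n : ℕ, ((m : ℝ) + n + p) * x ^ n * Real.Gamma (n + p + 1) / Real.Gamma (n + 1) ^ 2)
        / (Real.Gamma (p + 1) * F11 p x)
      = ((m : ℝ) + p) * F22 m p x / F11 p x :=
  number_expectation_hypergeometric_general m p hmp x
end
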